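/- arXiv:1901.00984 — 5 statements merged into one kernel-verified Lean document; each statement's English description precedes it below -/
import Mathlib

section
/- Let n, p, q be natural numbers with p ≤ n, let S be a subset of Fin n with |S| = n − p, and let M be a multiset of elements of Fin n of cardinality n − p + q such that every element of S occurs in M with multiplicity at least 1. Let c be the number of indices i ∉ S whose multiplicity in M equals exactly 1 (corrupted indices), and let e be the number of indices i ∈ Fin n whose multiplicity in M is not equal to 1 (erased indices). Then 2·c + e ≤ p + q. -/
/-!
Give each index `i` the weight `2·[i corrupted] + [i erased] + 2·[i ∈ S]`. A case check shows
this weight is at most `count i + 1` whenever `i ∈ S` forces `count i ≥ 1`; summing over all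
indices bounds `2c + e + 2|S|` by `|M| + n`, which is at most `p + q + 2|S|` here.
-/

open Finset

section HalfErrors

variable {α : Type*} [DecidableEq α] (S : Finset α) (M : Multiset α)

lemma half_error_weight_le (i : α) (hcov : i ∈ S → 1 ≤ M.count i) :
    2 * (if i ∉ S ∧ M.count i = 1 then 1 else 0) + (if M.count i ≠ 1 then 1 else 0)
      + 2 * (if i ∈ S then 1 else 0) ≤ M.count i + 1 := by
  by_cases hi : i ∈ S <;> by_cases h1 : M.count i = 1 <;> simp [hi, h1]
  have := hcov hi
  omega

lemma two_mul_card_corrupted_add_card_erased_add_two_mul_card_le [Fintype α]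
    (hcov : ∀ i ∈ S, 1 ≤ M.count i) :
    2 * #{i | i ∉ S ∧ M.count i = 1} + #{i | M.count i ≠ 1} + 2 * #S
      ≤ Multiset.card M + Fintype.card α := by
  have hS : #S = #{i | i ∈ S} := by simp
  rw [hS, card_filter, card_filter, card_filter, mul_sum, mul_sum, ← sum_add_distrib,
    ← sum_add_distrib, ← Multiset.sum_count_eq_card (fun a _ => mem_univ a),
    Fintype.card_eq_sum_ones, ← sum_add_distrib]
  exact sum_le_sum fun i _ => half_error_weight_le S M i (hcov i)

end HalfErrors

theorem stmt_0_general (n p q : ℕ) (S : Finset (Fin n))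
    (hS : S.card = n - p) (M : Multiset (Fin n))
    (hM : Multiset.card M = n - p + q)
    (hcov : ∀ i ∈ S, 1 ≤ M.count i) :
    2 * (Finset.univ.filter (fun i : Fin n => i ∉ S ∧ M.count i = 1)).card
      + (Finset.univ.filter (fun i : Fin n => M.count i ≠ 1)).card
      ≤ p + q := by
  have hbound := two_mul_card_corrupted_add_card_erased_add_two_mul_card_le S M hcov
  rw [hS, hM, Fintype.card_fin] at hbound
  omega

/-- Half-error counting for the trivial indexing scheme over an insertion-deletion
channel: `S` is the set of correctly transmitted indices (`p` deletions, `q`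
insertions), `M` is the multiset of received index labels, `c` counts corruptions
(indices outside `S` with multiplicity exactly 1) and `e` counts erasures
(indices with multiplicity ≠ 1); then `2c + e ≤ p + q`. -/
theorem stmt_0 (n p q : ℕ) (hpn : p ≤ n) (S : Finset (Fin n))
    (hS : S.card = n - p) (M : Multiset (Fin n))
    (hM : Multiset.card M = n - p + q)
    (hcov : ∀ i ∈ S, 1 ≤ M.count i) :
    2 * (Finset.univ.filter (fun i : Fin n => i ∉ S ∧ M.count i = 1)).card
      + (Finset.univ.filter (fun i : Fin n => M.count i ≠ 1)).card
      ≤ p + q :=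
  stmt_0_general n p q S hS M hM hcov
end

section
/- Let s ≥ 1, let x be a list of Booleans, and let y be obtained from x by inserting a single symbol b at some position i (y = x.insertIdx i b). Then the number of positions at which the pattern 1·0^s occurs in y and the number of positions at which it occurs in x differ by at most 1. -/
/-- The pattern `P` occurs in the binary string `z` at position `p`. -/
def occursAt (P z : List Bool) (p : ℕ) : Prop :=
  (z.drop p).take P.length = P

/-- The header pattern `1·0^s`: the symbol 1 followed by `s` copies of 0. -/
def header (s : ℕ) : List Bool :=
  true :: List.replicate s false

/-- The number of positions at which the pattern `1·0^s` occurs in `z`. -/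
noncomputable def occCount (s : ℕ) (z : List Bool) : ℕ :=
  Set.ncard {p : ℕ | occursAt (header s) z p}

lemma occursAt_iff (P z : List Bool) (p : ℕ) :
    occursAt P z p ↔ ∀ j < P.length, z[p + j]? = P[j]? := by
  unfold occursAt
  constructor
  · intro h j hj
    have := congrArg (fun l => l[j]?) h
    rwa [List.getElem?_take_of_lt hj, List.getElem?_drop] at this
  · intro h
    apply List.ext_getElem?
    intro n
    by_cases hn : n < P.length
    · rw [List.getElem?_take_of_lt hn, List.getElem?_drop]
      exact h n hn
    · rw [List.getElem?_eq_none (by simp [List.length_take]; omega),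
        List.getElem?_eq_none (by omega)]

lemma header_length (s : ℕ) : (header s).length = s + 1 := by simp [header]

lemma header_zero (s : ℕ) : (header s)[0]? = some true := by simp [header]

lemma header_pos (s j : ℕ) (h1 : 1 ≤ j) (h2 : j ≤ s) : (header s)[j]? = some false := by
  obtain ⟨k, rfl⟩ := Nat.exists_eq_add_of_le h1
  simp only [header, Nat.add_comm 1 k, List.getElem?_cons_succ, List.getElem?_replicate]
  rw [if_pos (by omega)]

/-- Two occurrences of the header cannot overlap. -/
lemma header_no_overlap (s : ℕ) (z : List Bool) (p q : ℕ)
    (hp : occursAt (header s) z p) (hq : occursAt (header s) z q)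
    (h1 : p < q) (h2 : q ≤ p + s) : False := by
  rw [occursAt_iff] at hp hq
  have ht := hq 0 (by rw [header_length]; omega)
  have hf := hp (q - p) (by rw [header_length]; omega)
  rw [header_zero] at ht
  rw [header_pos s (q - p) (by omega) (by omega), show p + (q - p) = q by omega] at hf
  rw [Nat.add_zero] at ht
  rw [ht] at hf
  simp at hf

lemma insertIdx_getElem?_lt (x : List Bool) (i n : ℕ) (b : Bool) (h : n < i) :
    (x.insertIdx i b)[n]? = x[n]? := by
  by_cases hi : i ≤ x.length
  · have hn : n < x.length := by omega
    have hlen : (x.insertIdx i b).length = x.length + 1 := by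
      rw [List.length_insertIdx, if_pos hi]
    rw [List.getElem?_eq_getElem (by omega), List.getElem?_eq_getElem hn,
      List.getElem_insertIdx_of_lt h (by omega)]
  · rw [List.insertIdx_of_length_lt (by omega)]

lemma insertIdx_getElem?_ge (x : List Bool) (i n : ℕ) (b : Bool) (h : i ≤ n) :
    (x.insertIdx i b)[n + 1]? = x[n]? := by
  by_cases hi : i ≤ x.length
  · have hlen : (x.insertIdx i b).length = x.length + 1 := by
      rw [List.length_insertIdx, if_pos hi]
    obtain ⟨k, rfl⟩ := Nat.exists_eq_add_of_le h
    by_cases hn : i + k < x.length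
    · rw [List.getElem?_eq_getElem (by omega), List.getElem?_eq_getElem hn]
      exact congrArg some (List.getElem_insertIdx_add_succ x b i k hn _)
    · rw [List.getElem?_eq_none (by omega), List.getElem?_eq_none (by omega)]
  · rw [List.insertIdx_of_length_lt (by omega)]
    rw [List.getElem?_eq_none (by omega), List.getElem?_eq_none (by omega)]

lemma occursAt_finite (s : ℕ) (z : List Bool) :
    {p : ℕ | occursAt (header s) z p}.Finite := by
  apply Set.Finite.subset (Set.finite_Iio z.length)
  intro p hp
  rw [Set.mem_setOf_eq, occursAt_iff] at hp
  have := hp 0 (by rw [header_length]; omega)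
  rw [header_zero, Nat.add_zero] at this
  have hlt := List.getElem?_eq_some_iff.mp this
  exact hlt.1

/-- A single insertion changes the number of occurrences of the header
pattern `1·0^s` by at most 1. -/
theorem stmt_4 (s : ℕ) (hs : 1 ≤ s) (x : List Bool) (i : ℕ) (b : Bool)
    (y : List Bool) (hy : y = x.insertIdx i b) :
    occCount s y ≤ occCount s x + 1 ∧ occCount s x ≤ occCount s y + 1 := by
  subst hy
  set y := x.insertIdx i b with hy
  set Sx := {p : ℕ | occursAt (header s) x p} with hSx
  set Sy := {p : ℕ | occursAt (header s) y p} with hSy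
  have hfx : Sx.Finite := occursAt_finite s x
  have hfy : Sy.Finite := occursAt_finite s y
  -- transfer lemmas
  have A1 : ∀ p, p + s + 1 ≤ i → (occursAt (header s) y p ↔ occursAt (header s) x p) := by
    intro p hp
    rw [occursAt_iff, occursAt_iff, header_length]
    constructor <;> intro h j hj <;>
      [rw [← insertIdx_getElem?_lt x i (p + j) b (by omega)];
       rw [insertIdx_getElem?_lt x i (p + j) b (by omega)]] <;> exact h j hj
  have A2 : ∀ p, i ≤ p → (occursAt (header s) y (p + 1) ↔ occursAt (header s) x p) := by
    intro p hp
    rw [occursAt_iff, occursAt_iff, header_length]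
    constructor <;> intro h j hj
    · rw [← insertIdx_getElem?_ge x i (p + j) b (by omega)]
      rw [show p + j + 1 = p + 1 + j by omega]
      exact h j hj
    · rw [show p + 1 + j = p + j + 1 by omega,
        insertIdx_getElem?_ge x i (p + j) b (by omega)]
      exact h j hj
  constructor
  · -- occCount y ≤ occCount x + 1
    set T := {q ∈ Sy | q ≤ i ∧ i < q + s + 1} with hT
    have hTsub : T ⊆ Sy := fun q hq => hq.1
    have hT1 : T.ncard ≤ 1 := by
      rw [Set.ncard_le_one (hfy.subset hTsub)]
      intro a ha b hb
      by_contra hne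
      obtain ⟨ha1, ha2, ha3⟩ := ha
      obtain ⟨hb1, hb2, hb3⟩ := hb
      rcases Nat.lt_or_ge a b with h | h
      · exact header_no_overlap s y a b ha1 hb1 h (by omega)
      · exact header_no_overlap s y b a hb1 ha1 (by omega) (by omega)
    have himg : Sy \ T ⊆ (fun p => if p + s + 1 ≤ i then p else p + 1) '' Sx := by
      rintro q ⟨hq, hqT⟩
      by_cases hc : q + s + 1 ≤ i
      · exact ⟨q, (A1 q hc).mp hq, by simp [hc]⟩
      · have hgt : i < q := by
          by_contra hle
          exact hqT ⟨hq, by omega, by omega⟩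
        refine ⟨q - 1, (A2 (q - 1) (by omega)).mp (by rwa [Nat.sub_add_cancel (by omega)]), ?_⟩
        simp only
        rw [if_neg (by omega)]
        omega
    calc Sy.ncard = ((Sy \ T) ∪ T).ncard := by rw [Set.diff_union_of_subset hTsub]
      _ ≤ (Sy \ T).ncard + T.ncard := Set.ncard_union_le _ _
      _ ≤ ((fun p => if p + s + 1 ≤ i then p else p + 1) '' Sx).ncard + 1 :=
          add_le_add (Set.ncard_le_ncard himg (hfx.image _)) hT1
      _ ≤ Sx.ncard + 1 := Nat.add_le_add_right (Set.ncard_image_le hfx) 1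
  · -- occCount x ≤ occCount y + 1
    set T := {p ∈ Sx | p < i ∧ i < p + s + 1} with hT
    have hTsub : T ⊆ Sx := fun q hq => hq.1
    have hT1 : T.ncard ≤ 1 := by
      rw [Set.ncard_le_one (hfx.subset hTsub)]
      intro a ha b hb
      by_contra hne
      obtain ⟨ha1, ha2, ha3⟩ := ha
      obtain ⟨hb1, hb2, hb3⟩ := hb
      rcases Nat.lt_or_ge a b with h | h
      · exact header_no_overlap s x a b ha1 hb1 h (by omega)
      · exact header_no_overlap s x b a hb1 ha1 (by omega) (by omega)
    have himg : Sx \ T ⊆ (fun q => if q + s + 1 ≤ i then q else q - 1) '' Sy := by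
      rintro p ⟨hp, hpT⟩
      by_cases hc : p + s + 1 ≤ i
      · exact ⟨p, (A1 p hc).mpr hp, by simp [hc]⟩
      · have hge : i ≤ p := by
          by_contra hlt
          exact hpT ⟨hp, by omega, by omega⟩
        refine ⟨p + 1, (A2 p hge).mpr hp, ?_⟩
        simp only
        rw [if_neg (by omega)]
        omega
    calc Sx.ncard = ((Sx \ T) ∪ T).ncard := by rw [Set.diff_union_of_subset hTsub]
      _ ≤ (Sx \ T).ncard + T.ncard := Set.ncard_union_le _ _
      _ ≤ ((fun q => if q + s + 1 ≤ i then q else q - 1) '' Sy).ncard + 1 :=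
          add_le_add (Set.ncard_le_ncard himg (hfy.image _)) hT1
      _ ≤ Sy.ncard + 1 := Nat.add_le_add_right (Set.ncard_image_le hfy) 1
end

section
/- Let k ≥ 1 and let L be a list of blocks, each block being a list of Booleans of length exactly k that is not identically false (not equal to replicate k false). Then the concatenation L.join contains no contiguous substring equal to replicate (2k − 1) false; that is, there is no position p such that the substring of L.join of length 2k − 1 starting at p consists entirely of the symbol false. -/
/-- The concatenation of blocks of length exactly `k ≥ 1`, none of which is
identically 0, contains no contiguous run of `2k - 1` zeros. -/
theorem stmt_8 (k : ℕ) (hk : 1 ≤ k) (L : List (List Bool))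
    (hlen : ∀ w ∈ L, w.length = k)
    (hnz : ∀ w ∈ L, w ≠ List.replicate k false) :
    ∀ p : ℕ,
      (L.flatten.drop p).take (2 * k - 1) ≠ List.replicate (2 * k - 1) false := by
  induction L with
  | nil =>
      intro p h
      simp at h
      omega
  | cons w L' ih =>
      have hwlen : w.length = k := hlen w (List.mem_cons_self)
      intro p h
      by_cases hp : k ≤ p
      · -- the window lies entirely in the tail
        have hdrop : (List.flatten (w :: L')).drop p = L'.flatten.drop (p - k) := by
          rw [List.flatten_cons, List.drop_append,
            List.drop_eq_nil_of_le (by omega), hwlen, List.nil_append]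
        rw [hdrop] at h
        exact ih (fun v hv => hlen v (List.mem_cons_of_mem _ hv))
          (fun v hv => hnz v (List.mem_cons_of_mem _ hv)) (p - k) h
      · push_neg at hp
        -- decompose the window
        have hdrop : (List.flatten (w :: L')).drop p = w.drop p ++ L'.flatten := by
          rw [List.flatten_cons, List.drop_append_of_le_length (by omega)]
        rw [hdrop] at h
        have htake : (w.drop p ++ L'.flatten).take (2 * k - 1)
            = w.drop p ++ L'.flatten.take (2 * k - 1 - (k - p)) := by
          rw [List.take_append, List.take_of_length_le (by simp; omega)]
          congr 2
          simp; omega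
        rw [htake] at h
        -- all elements of the window are false
        have hmem : ∀ b ∈ w.drop p ++ L'.flatten.take (2 * k - 1 - (k - p)), b = false := by
          rw [h]; intro b hb; exact List.eq_of_mem_replicate hb
        have hlentot : (w.drop p ++ L'.flatten.take (2 * k - 1 - (k - p))).length
            = 2 * k - 1 := by rw [h]; simp
        rcases Nat.eq_zero_or_pos p with hp0 | hp0
        · -- p = 0 : w itself is entirely inside the window and all false
          subst hp0
          apply hnz w (List.mem_cons_self)
          rw [List.eq_replicate_iff]
          refine ⟨hwlen, fun b hb => hmem b ?_⟩
          simp only [List.drop_zero, List.mem_append]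
          exact Or.inl hb
        · -- p ≥ 1 : the first block of L' is entirely inside the window
          have hLlen : (L'.flatten.take (2 * k - 1 - (k - p))).length = k - 1 + p := by
            have : (w.drop p).length = k - p := by simp [hwlen]
            rw [List.length_append, this] at hlentot
            omega
          match L', hLlen with
          | [], hLlen => simp at hLlen; omega
          | w' :: L'', hLlen =>
            have hw'len : w'.length = k :=
              hlen w' (List.mem_cons_of_mem _ (List.mem_cons_self))
            apply hnz w' (List.mem_cons_of_mem _ (List.mem_cons_self))
            rw [List.eq_replicate_iff]
            refine ⟨hw'len, fun b hb => hmem b ?_⟩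
            refine List.mem_append_right _ ?_
            rw [List.flatten_cons, List.take_append,
              List.take_of_length_le (by rw [hw'len]; omega)]
            exact List.mem_append_left _ hb
end

section
/- Let k ≥ 1 and let r, m be natural numbers with 2^r ≤ (2^k − 1)^m. Then there exists an injective function from the set of binary strings of length r (functions Fin r → Bool) into the set of binary strings of length m·k that contain no contiguous run of 2k − 1 consecutive zeros (no contiguous substring equal to replicate (2k − 1) false). -/
/-!
Since `2 ^ r ≤ (2 ^ k - 1) ^ m`, binary strings of length `r` embed into words of length `m`
over the alphabet of nonzero `k`-bit blocks; concatenating the blocks of such a word is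
injective. Any window of `2k - 1` consecutive positions contains a whole aligned block, and
that block has a `1`, so no window is all zeros.
-/

theorem take_drop_ne_replicate_false_of_blocks {z : List Bool} {k : ℕ}
    (hblock : ∀ j, k * j + k ≤ z.length → ∃ i < k, z[k * j + i]? = some true) (p : ℕ) :
    (z.drop p).take (2 * k - 1) ≠ List.replicate (2 * k - 1) false := by
  intro hrun
  have hk : 0 < k := Nat.pos_of_ne_zero fun hk => by simpa [hk] using hblock 0
  have hlen : p + (2 * k - 1) ≤ z.length := by
    have := congrArg List.length hrun
    simp only [List.length_take, List.length_drop, List.length_replicate] at this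
    omega
  -- the first block boundary at or after `p` starts a block lying inside the window
  obtain ⟨j, hj⟩ : ∃ j, p ≤ k * j ∧ k * j + k ≤ p + (2 * k - 1) := by
    have := Nat.div_add_mod (p + k - 1) k
    have := Nat.mod_lt (p + k - 1) hk
    exact ⟨(p + k - 1) / k, by omega⟩
  obtain ⟨i, hi, htrue⟩ := hblock j (by omega)
  have hfalse : ((z.drop p).take (2 * k - 1))[k * j + i - p]? = some false := by
    rw [hrun, List.getElem?_replicate, if_pos (by omega)]
  rw [List.getElem?_take, if_pos (by omega), List.getElem?_drop,
    show p + (k * j + i - p) = k * j + i by omega, htrue] at hfalse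
  simp at hfalse

def blockConcat {m k : ℕ} (c : Fin m → Fin k → Bool) : List Bool :=
  List.ofFn (Function.uncurry c ∘ finProdFinEquiv.symm)

@[simp]
theorem blockConcat_length {m k : ℕ} (c : Fin m → Fin k → Bool) :
    (blockConcat c).length = m * k :=
  List.length_ofFn

theorem blockConcat_getElem? {m k : ℕ} (c : Fin m → Fin k → Bool) (j : Fin m) (i : Fin k) :
    (blockConcat c)[k * j + i]? = some (c j i) := by
  have hidx : k * j + i = finProdFinEquiv (j, i) := by
    simp [finProdFinEquiv_apply_val, add_comm]
  rw [hidx, blockConcat, List.getElem?_ofFn, dif_pos (finProdFinEquiv (j, i)).isLt]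
  simp only [Fin.eta, Function.comp_apply, Equiv.symm_apply_apply, Function.uncurry_apply_pair]

theorem blockConcat_injective {m k : ℕ} : Function.Injective (blockConcat (m := m) (k := k)) :=
  List.ofFn_injective.comp
    (finProdFinEquiv.symm.surjective.injective_comp_right.comp Function.uncurry_injective)

theorem take_drop_blockConcat_ne_replicate_false {m k : ℕ} (hk : 0 < k)
    {c : Fin m → Fin k → Bool} (hc : ∀ j, c j ≠ fun _ => false) (p : ℕ) :
    ((blockConcat c).drop p).take (2 * k - 1) ≠ List.replicate (2 * k - 1) false := by
  refine take_drop_ne_replicate_false_of_blocks (fun j hj => ?_) p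
  have hjm : j < m := by
    rw [blockConcat_length] at hj
    exact Nat.lt_of_mul_lt_mul_left (a := k) (by rw [mul_comm k m]; omega)
  obtain ⟨i, hi⟩ := Function.ne_iff.mp (hc ⟨j, hjm⟩)
  exact ⟨i, i.isLt, by simpa [hi] using blockConcat_getElem? c ⟨j, hjm⟩ i⟩

/-- If `2^r ≤ (2^k - 1)^m` (with `k ≥ 1`), there is an injection from binary
strings of length `r` into binary strings of length `m·k` containing no
contiguous run of `2k - 1` zeros. -/
theorem stmt_9 (k : ℕ) (hk : 1 ≤ k) (r m : ℕ)
    (h : 2 ^ r ≤ (2 ^ k - 1) ^ m) :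
    ∃ f : (Fin r → Bool) →
        {z : List Bool // z.length = m * k ∧
          ∀ p : ℕ,
            (z.drop p).take (2 * k - 1) ≠ List.replicate (2 * k - 1) false},
      Function.Injective f := by
  have hcard : Fintype.card (Fin r → Bool) ≤
      Fintype.card (Fin m → {b : Fin k → Bool // b ≠ fun _ => false}) := by
    simpa using h
  obtain ⟨e⟩ := Function.Embedding.nonempty_of_card_le hcard
  refine ⟨fun x => ⟨blockConcat fun j => (e x j).1, blockConcat_length _,
    take_drop_blockConcat_ne_replicate_false hk fun j => (e x j).2⟩, fun x y hxy => ?_⟩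
  exact e.injective <|
    Subtype.val_injective.comp_left (blockConcat_injective (congrArg Subtype.val hxy))
end

section
/- Let k ≥ 1 and m ≥ 0. The number of binary strings of length m·k that contain no contiguous run of 2k − 1 consecutive zeros is at least (2^k − 1)^m. -/
private lemma aux_true (l : List Bool) (h : l ≠ List.replicate l.length false) :
    ∃ i, ∃ h : i < l.length, l[i] = true := by
  by_contra hc
  push_neg at hc
  apply h
  rw [List.eq_replicate_iff]
  refine ⟨rfl, fun b hb => ?_⟩
  rw [List.mem_iff_getElem] at hb
  obtain ⟨i, hi, rfl⟩ := hb
  simpa using hc i hi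

private lemma aux_entry (z : List Bool) (L p q t : ℕ) (hq : q < L) (hpq : p + q < z.length)
    (het : t = p + q)
    (h : (z.drop p).take L = List.replicate L false) : z[t]? = some false := by
  subst het
  have h2 := congrArg (fun l => l[q]?) h
  simp [List.getElem?_take, List.getElem?_drop, hq, List.getElem?_eq_getElem hpq] at h2
  rw [List.getElem?_eq_getElem hpq, h2]

private lemma aux_norun (k m : ℕ) (hk : 1 ≤ k) (z : List Bool) (hz : z.length = m * k)
    (hblock : ∀ j, (hj : j < m) → ∃ i, ∃ hi : i < k, ∃ ht : j * k + i < z.length,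
      z[j * k + i] = true) :
    ∀ p : ℕ, (z.drop p).take (2 * k - 1) ≠ List.replicate (2 * k - 1) false := by
  intro p h
  set L := 2 * k - 1 with hL
  have hlen := congrArg List.length h
  simp [hz] at hlen
  have hpL : p + L ≤ m * k := by omega
  set j := (p + k - 1) / k with hj
  obtain ⟨r, hr, hdm⟩ : ∃ r, r < k ∧ j * k + r = p + k - 1 :=
    ⟨_, Nat.mod_lt _ (by omega), by rw [Nat.mul_comm]; exact Nat.div_add_mod _ _⟩
  have h1 : j * k ≤ p + k - 1 := by omega
  have h2 : p + k - 1 < j * k + k := by omega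
  have hjm : j < m := by
    by_contra hc
    push_neg at hc
    have := Nat.mul_le_mul_right k hc
    omega
  obtain ⟨i, hi, ht, hv⟩ := hblock j hjm
  have := aux_entry z L p (j * k + i - p) (j * k + i) (by omega) (by omega) (by omega) h
  rw [List.getElem?_eq_getElem ht, hv] at this
  simp at this

/-- For `k ≥ 1`, the number of binary strings of length `m·k` containing no
contiguous run of `2k - 1` zeros is at least `(2^k - 1)^m`. -/
theorem stmt_10 (k : ℕ) (hk : 1 ≤ k) (m : ℕ) :
    (2 ^ k - 1) ^ m ≤
      Nat.card {z : List Bool // z.length = m * k ∧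
        ∀ p : ℕ,
          (z.drop p).take (2 * k - 1) ≠ List.replicate (2 * k - 1) false} := by
  classical
  set B := {v : List Bool // v.length = k ∧ v ≠ List.replicate k false} with hB
  -- T is finite
  have hTfin : Finite {z : List Bool // z.length = m * k ∧
      ∀ p : ℕ, (z.drop p).take (2 * k - 1) ≠ List.replicate (2 * k - 1) false} := by
    apply Finite.of_injective
      (fun z : {z : List Bool // z.length = m * k ∧
        ∀ p : ℕ, (z.drop p).take (2 * k - 1) ≠ List.replicate (2 * k - 1) false} =>
        (fun t : Fin (m * k) => z.1[(t : ℕ)]'(by rw [z.2.1]; exact t.2)))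
    intro a b hab
    apply Subtype.ext
    apply List.ext_getElem (by rw [a.2.1, b.2.1])
    intro i h1 h2
    have := congrFun hab ⟨i, by rw [← a.2.1]; exact h1⟩
    simpa using this
  have hk0 : 0 < k := hk
  have hdiv : ∀ t : Fin (m * k), (t : ℕ) / k < m := fun t =>
    Nat.div_lt_iff_lt_mul hk0 |>.2 t.2
  set F : (Fin m → B) → List Bool := fun g =>
    List.ofFn (fun t : Fin (m * k) =>
      ((g ⟨(t : ℕ) / k, hdiv t⟩).1)[(t : ℕ) % k]'(by
        rw [(g ⟨(t : ℕ) / k, hdiv t⟩).2.1]; exact Nat.mod_lt _ hk0)) with hF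
  have hFlen : ∀ g, (F g).length = m * k := fun g => List.length_ofFn
  have hFget : ∀ (g : Fin m → B) (j) (hj : j < m) (i) (hi : i < k)
      (ht : j * k + i < (F g).length),
      (F g)[j * k + i] = ((g ⟨j, hj⟩).1)[i]'(by rw [(g ⟨j, hj⟩).2.1]; exact hi) := by
    intro g j hj i hi ht
    have e1 : (j * k + i) / k = j := by
      rw [Nat.add_comm, Nat.add_mul_div_right _ _ hk0, Nat.div_eq_of_lt hi]; omega
    have e2 : (j * k + i) % k = i := by
      rw [Nat.add_comm, Nat.add_mul_mod_self_right, Nat.mod_eq_of_lt hi]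
    simp only [hF, List.getElem_ofFn, e1, e2]
  -- injectivity
  have hFinj : Function.Injective F := by
    intro g g' hgg
    funext j
    apply Subtype.ext
    apply List.ext_getElem (by rw [(g j).2.1, (g' j).2.1])
    intro i h1 h2
    have hi : i < k := by rw [(g j).2.1] at h1; exact h1
    have ht : (j : ℕ) * k + i < (F g).length := by
      rw [hFlen]
      calc (j : ℕ) * k + i < (j : ℕ) * k + k := by omega
        _ = ((j : ℕ) + 1) * k := by ring
        _ ≤ m * k := Nat.mul_le_mul_right k j.2
    have ht' : (j : ℕ) * k + i < (F g').length := by rw [hFlen, ← hFlen g]; exact ht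
    have e1 := hFget g j j.2 i hi ht
    have e2 := hFget g' j j.2 i hi ht'
    have : (F g)[(j : ℕ) * k + i]'ht = (F g')[(j : ℕ) * k + i]'ht' := by
      simp only [hgg]
    rw [e1, e2] at this
    simpa using this
  -- F lands in T
  have hmem : ∀ g : Fin m → B, (F g).length = m * k ∧
      ∀ p : ℕ, ((F g).drop p).take (2 * k - 1) ≠ List.replicate (2 * k - 1) false := by
    intro g
    refine ⟨hFlen g, aux_norun k m hk (F g) (hFlen g) ?_⟩
    intro j hj
    obtain ⟨i, hi, hv⟩ := aux_true (g ⟨j, hj⟩).1 (by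
      rw [(g ⟨j, hj⟩).2.1]; exact (g ⟨j, hj⟩).2.2)
    have hik : i < k := by rw [(g ⟨j, hj⟩).2.1] at hi; exact hi
    have ht : j * k + i < (F g).length := by
      rw [hFlen]
      calc j * k + i < j * k + k := by omega
        _ = (j + 1) * k := by ring
        _ ≤ m * k := Nat.mul_le_mul_right k hj
    exact ⟨i, hik, ht, by rw [hFget g j hj i hik ht]; exact hv⟩
  -- final counting
  have hinj2 : Function.Injective (fun g : Fin m → B =>
      (⟨F g, hmem g⟩ : {z : List Bool // z.length = m * k ∧
        ∀ p : ℕ, (z.drop p).take (2 * k - 1) ≠ List.replicate (2 * k - 1) false})) := by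
    intro g g' h
    exact hFinj (congrArg Subtype.val h)
  have hle := Nat.card_le_card_of_injective _ hinj2
  refine le_trans ?_ hle
  rw [Nat.card_fun]
  have hBcard : Nat.card B = 2 ^ k - 1 := by
    have e : B ≃ {w : List.Vector Bool k // w ≠ List.Vector.replicate k false} :=
      { toFun := fun v => ⟨⟨v.1, v.2.1⟩, fun h => v.2.2 (congrArg Subtype.val h)⟩
        invFun := fun w => ⟨w.1.1, w.1.2, fun h => w.2 (Subtype.ext h)⟩
        left_inv := fun v => rfl
        right_inv := fun w => rfl }
    rw [Nat.card_eq_of_bijective e e.bijective]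
    rw [Nat.card_eq_fintype_card]
    rw [Fintype.card_subtype_compl, Fintype.card_subtype_eq]
    simp
  rw [hBcard, Nat.card_eq_fintype_card, Fintype.card_fin]
end
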